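/- Fix μ₁ < μ₂ ∈ ℝ, π ∈ (0,1) and x ∈ ℝ with x > (μ₁+μ₂)/2. Writing p_σ(x) = π φ_{μ₁,σ}(x) + (1−π) φ_{μ₂,σ}(x), one has s_{p_σ}(x) + (x−μ₂)/σ² → 0 as σ → 0⁺; that is, the mixture score converges to the score of the right Gaussian component. -/

import Mathlib

open MeasureTheory Filter

/-- Gaussian density with mean `μ` and standard deviation `σ`. -/
noncomputable def gaussian (μ σ : ℝ) (x : ℝ) : ℝ :=
  (σ * Real.sqrt (2 * Real.pi))⁻¹ * Real.exp (-(x - μ) ^ 2 / (2 * σ ^ 2))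

/-- The score of a density `ρ`: the derivative of its log. -/
noncomputable def score (ρ : ℝ → ℝ) (x : ℝ) : ℝ :=
  deriv (fun y => Real.log (ρ y)) x

/-- Fisher divergence between densities `q` and `p`. -/
noncomputable def fisherDiv (q p : ℝ → ℝ) : ℝ :=
  ∫ x : ℝ, q x * (score q x - score p x) ^ 2

/-!
At `x`, the ratio of the two components is `φ_{μ₁,σ}(x) / φ_{μ₂,σ}(x) = exp (-c / σ²)` with
`c = (μ₂ - μ₁)(2x - μ₁ - μ₂)/2`, and `c > 0` exactly when `x` lies right of the midpoint. The
difference between the mixture score and the right component's score is the left component's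
posterior weight times `(μ₁ - μ₂)/σ²`, i.e. `w (μ₁ - μ₂)/c · t e^{-t} / (w e^{-t} + 1 - w)` with
`t = c/σ² → ∞`, which tends to `0`.
-/

open Real Topology

lemma gaussian_pos (μ : ℝ) {σ : ℝ} (hσ : 0 < σ) (x : ℝ) : 0 < gaussian μ σ x := by
  unfold gaussian
  have := sqrt_pos.mpr (by positivity : 0 < 2 * π)
  positivity

lemma hasDerivAt_gaussian (μ : ℝ) {σ : ℝ} (hσ : σ ≠ 0) (x : ℝ) :
    HasDerivAt (gaussian μ σ) (gaussian μ σ x * (-(x - μ) / σ ^ 2)) x := by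
  have hexponent :
      HasDerivAt (fun y : ℝ => -(y - μ) ^ 2 / (2 * σ ^ 2)) (-(x - μ) / σ ^ 2) x := by
    refine ((((hasDerivAt_id x).sub_const μ).fun_pow 2).neg.div_const _).congr_deriv ?_
    field_simp
    simp
  exact (hexponent.exp.const_mul _).congr_deriv (by unfold gaussian; ring)

/-- Completing the square: the two exponents differ by an affine function of `x`. -/
lemma gaussian_eq_mul_exp (μ₁ μ₂ : ℝ) {σ : ℝ} (hσ : σ ≠ 0) (x : ℝ) :
    gaussian μ₁ σ x =
      gaussian μ₂ σ x * exp (-((μ₂ - μ₁) * (2 * x - μ₁ - μ₂) / 2 / σ ^ 2)) := by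
  unfold gaussian
  rw [mul_assoc, ← exp_add]
  congr 2
  field_simp
  ring

lemma score_eq_of_hasDerivAt {ρ : ℝ → ℝ} {ρ' x : ℝ} (hρ : HasDerivAt ρ ρ' x)
    (hx : ρ x ≠ 0) : score ρ x = ρ' / ρ x :=
  (hρ.log hx).deriv

noncomputable def gaussMix (w μ₁ μ₂ σ : ℝ) (y : ℝ) : ℝ :=
  w * gaussian μ₁ σ y + (1 - w) * gaussian μ₂ σ y

lemma gaussMix_pos {w : ℝ} (hw₀ : 0 ≤ w) (hw₁ : w < 1) (μ₁ μ₂ : ℝ) {σ : ℝ} (hσ : 0 < σ)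
    (y : ℝ) : 0 < gaussMix w μ₁ μ₂ σ y :=
  add_pos_of_nonneg_of_pos (mul_nonneg hw₀ (gaussian_pos μ₁ hσ y).le)
    (mul_pos (by linarith) (gaussian_pos μ₂ hσ y))

lemma score_gaussMix_add (w μ₁ μ₂ : ℝ) {σ x : ℝ} (hσ : σ ≠ 0)
    (hx : gaussMix w μ₁ μ₂ σ x ≠ 0) :
    score (gaussMix w μ₁ μ₂ σ) x + (x - μ₂) / σ ^ 2 =
      w * (μ₁ - μ₂) / σ ^ 2 * (gaussian μ₁ σ x / gaussMix w μ₁ μ₂ σ x) := by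
  have hderiv : HasDerivAt (gaussMix w μ₁ μ₂ σ) _ x :=
    ((hasDerivAt_gaussian μ₁ hσ x).const_mul w).fun_add
      ((hasDerivAt_gaussian μ₂ hσ x).const_mul (1 - w))
  rw [score_eq_of_hasDerivAt hderiv hx]
  unfold gaussMix at hx ⊢
  field_simp
  ring

lemma gaussian_div_gaussMix (w μ₁ μ₂ : ℝ) {σ : ℝ} (hσ : 0 < σ) (x : ℝ) :
    gaussian μ₁ σ x / gaussMix w μ₁ μ₂ σ x =
      exp (-((μ₂ - μ₁) * (2 * x - μ₁ - μ₂) / 2 / σ ^ 2)) /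
        (w * exp (-((μ₂ - μ₁) * (2 * x - μ₁ - μ₂) / 2 / σ ^ 2)) + (1 - w)) := by
  rw [gaussMix, gaussian_eq_mul_exp μ₁ μ₂ hσ.ne' x]
  set E := exp (-((μ₂ - μ₁) * (2 * x - μ₁ - μ₂) / 2 / σ ^ 2))
  rw [show w * (gaussian μ₂ σ x * E) + (1 - w) * gaussian μ₂ σ x
      = gaussian μ₂ σ x * (w * E + (1 - w)) by ring,
    mul_div_mul_left _ _ (gaussian_pos μ₂ hσ x).ne']

lemma tendsto_mul_exp_neg_div_atTop (a : ℝ) {b : ℝ} (hb : b ≠ 0) :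
    Tendsto (fun t => t * exp (-t) / (a * exp (-t) + b)) atTop (𝓝 0) := by
  have hnum : Tendsto (fun t => t * exp (-t)) atTop (𝓝 0) := by
    simpa using tendsto_pow_mul_exp_neg_atTop_nhds_zero 1
  have hden : Tendsto (fun t => a * exp (-t) + b) atTop (𝓝 b) := by
    simpa using (tendsto_exp_neg_atTop_nhds_zero.const_mul a).add_const b
  have h := hnum.div hden hb
  rwa [zero_div] at h

lemma tendsto_div_sq_nhdsGT_zero {c : ℝ} (hc : 0 < c) :
    Tendsto (fun σ : ℝ => c / σ ^ 2) (𝓝[>] 0) atTop := by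
  have h := ((tendsto_pow_atTop two_ne_zero).comp tendsto_inv_nhdsGT_zero).const_mul_atTop hc
  simpa only [Function.comp_def, inv_pow, ← div_eq_mul_inv] using h

/-- right of the midpoint, as `σ → 0⁺` the mixture score converges to
the score of the right Gaussian component. -/
theorem mixture_score_right_of_midpoint (μ₁ μ₂ w : ℝ) (hμ : μ₁ < μ₂)
    (hw : w ∈ Set.Ioo (0 : ℝ) 1) (x : ℝ) (hx : x > (μ₁ + μ₂) / 2) :
    Tendsto
      (fun σ => score (fun y => w * gaussian μ₁ σ y + (1 - w) * gaussian μ₂ σ y) x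
        + (x - μ₂) / σ ^ 2)
      (nhdsWithin 0 (Set.Ioi 0)) (nhds 0) := by
  obtain ⟨hw₀, hw₁⟩ := hw
  set c := (μ₂ - μ₁) * (2 * x - μ₁ - μ₂) / 2 with hc_def
  have hc : 0 < c := div_pos (mul_pos (by linarith) (by linarith)) two_pos
  have hlim := ((tendsto_mul_exp_neg_div_atTop w (sub_ne_zero.mpr hw₁.ne')).comp
    (tendsto_div_sq_nhdsGT_zero hc)).const_mul (w * (μ₁ - μ₂) / c)
  rw [mul_zero] at hlim
  refine hlim.congr' ?_
  filter_upwards [self_mem_nhdsWithin] with σ (hσ : 0 < σ)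
  change _ = score (gaussMix w μ₁ μ₂ σ) x + (x - μ₂) / σ ^ 2
  rw [score_gaussMix_add w μ₁ μ₂ hσ.ne' (gaussMix_pos hw₀.le hw₁ μ₁ μ₂ hσ x).ne',
    gaussian_div_gaussMix w μ₁ μ₂ hσ x, Function.comp_apply, ← hc_def]
  field_simp
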